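/- For all integers p ≥ 0, q ≥ 0 with p < q, the polynomials u·(u^{p+q−1} − u^{q−1} + u^p) and u^{p+q} − u^{q−1} + u^{p+1} in ℤ[u] are distinct; equivalently, u·β(Y_{p,q}) ≠ β(Y_{p+1,q}) where β(Y_{p,q}) = u^{p+q−1} − u^{max(p,q)−1} + u^{min(p,q)}. Similarly, for p = q, u·(u^{2p−1} − u^{p−1} + u^p) ≠ u^{2p}. -/
import Mathlib


open Polynomial

lemma xpow_ne {a b : ℕ} (h : a ≠ b) : (X ^ a : ℤ[X]) ≠ X ^ b := by
  intro he
  apply h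
  simpa using congrArg natDegree he

lemma sub_ne_zero_of_pow {a b : ℕ} (h : a ≠ b) : (X ^ a - X ^ b : ℤ[X]) ≠ 0 := by
  intro he
  exact xpow_ne h (sub_eq_zero.mp he)

theorem stmt_19 :
    (∀ p q : ℕ, p < q →
      (X : ℤ[X]) * (X ^ (p + q - 1) - X ^ (q - 1) + X ^ p) ≠
        X ^ (p + q) - X ^ (q - 1) + X ^ (p + 1)) ∧
    (∀ p : ℕ, (X : ℤ[X]) * (X ^ (2 * p - 1) - X ^ (p - 1) + X ^ p) ≠ X ^ (2 * p)) := by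
  constructor
  · intro p q hpq h
    obtain ⟨q', rfl⟩ : ∃ q', q = q' + 1 := ⟨q - 1, by omega⟩
    rcases Nat.eq_zero_or_pos p with rfl | hp
    · -- LHS = X, diff
      have : (X ^ (q' + 1) - X ^ q' : ℤ[X]) = 0 := by
        have := sub_eq_zero.mpr h
        simp only [Nat.zero_add, Nat.add_sub_cancel, pow_zero] at this ⊢
        linear_combination -this
      exact sub_ne_zero_of_pow (by omega) this
    · have hexp : p + (q' + 1) - 1 = p + q' := by omega
      have : (X ^ q' - X ^ (q' + 1) : ℤ[X]) = 0 := by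
        have := sub_eq_zero.mpr h
        rw [hexp, Nat.add_sub_cancel] at this
        linear_combination this + X ^ p * (X ^ (q' + 1) - X * X ^ q')
      exact sub_ne_zero_of_pow (by omega) this
  · intro p h
    rcases Nat.eq_zero_or_pos p with rfl | hp
    · simp at h
      exact xpow_ne (a := 1) (b := 0) (by omega) (by simpa using h)
    · obtain ⟨p', rfl⟩ : ∃ p', p = p' + 1 := ⟨p - 1, by omega⟩
      have h1 : 2 * (p' + 1) - 1 = 2 * p' + 1 := by omega
      have : (X ^ (p' + 2) - X ^ (p' + 1) : ℤ[X]) = 0 := by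
        have := sub_eq_zero.mpr h
        rw [h1, Nat.add_sub_cancel] at this
        linear_combination this + X ^ (2 * (p' + 1)) - X * X ^ (2 * p' + 1)
      exact sub_ne_zero_of_pow (by omega) this
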